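/- arXiv:2602.18220 — 2 statements merged into one kernel-verified Lean document; each statement's English description precedes it below -/
import Mathlib

section
/- Let D = D(𝒢,m,f) be a Dyer group. In Cay(D,S(X)), every 3-cycle has each of its edges labelled by the same vertex group: if g, h, k are three pairwise adjacent vertices of Cay(D,S(X)), then there exists a vertex v ∈ V(𝒢) such that g⁻¹h, h⁻¹k and g⁻¹k all belong to the vertex group {x_v^α : α ∈ ℤ_{f(v)} ∖ {0}} of x_v. -/
/-!
Call two vertices oddly connected if they are joined by a path of edges with odd labels.
For every vertex `t` there is a character `χ_t : D → ℤ_{f(t)}` sending `x_s` to `1` if `s` is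
oddly connected to `t` and to `0` otherwise: an odd braid relation only involves oddly connected
generators, and oddly connected vertices have the same label. Write the triangle as
`x_u^α x_v^β = x_w^γ` with all three syllables nontrivial. Evaluating the characters shows
that `u`, `v`, `w` are oddly connected; if `u ≠ v` all labels are `2` and `χ_u` gives
`1 + 1 = 1` in `ℤ/2`. Hence `u = v`, and the nontrivial power `x_u^(α+β)` lies in the vertex
group of `x_u`.
-/

universe u

/-! ### Dyer graphs and Dyer groups -/

/-- A Dyer graph: a finite simplicial graph `graph` together with an edge-labelling
`m : E(𝒢) → ℕ_{≥2}` (encoded as a symmetric function on pairs of vertices) and a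
vertex-labelling `f : V(𝒢) → ℕ_{≥2} ∪ {∞}`, subject to the compatibility condition
that `m(e) ≠ 2` forces both endpoints of `e` to have label `2`. -/
structure DyerGraph (V : Type u) [Fintype V] where
  graph : SimpleGraph V
  m : V → V → ℕ
  m_symm : ∀ u v, m u v = m v u
  two_le_m : ∀ u v, graph.Adj u v → 2 ≤ m u v
  f : V → ℕ∞
  two_le_f : ∀ v, 2 ≤ f v
  compat : ∀ u v, graph.Adj u v → m u v ≠ 2 → f u = 2 ∧ f v = 2

/-- The alternating product `a b a b ⋯` with `k` factors, in the free group. -/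
def altWord {V : Type u} : ℕ → FreeGroup V → FreeGroup V → FreeGroup V
  | 0, _, _ => 1
  | k + 1, a, b => a * altWord k b a

namespace DyerGraph

variable {V : Type u} [Fintype V] (Δ : DyerGraph V)

/-- The defining relators of the Dyer group: `x_v ^ f(v) = 1` whenever `f(v) ≠ ∞`,
and `[x_u,x_v]_{m(e)} = [x_v,x_u]_{m(e)}` for every edge `e = {u,v}`. -/
def rels : Set (FreeGroup V) :=
  {r | (∃ v : V, ∃ n : ℕ, Δ.f v = (n : ℕ∞) ∧ r = FreeGroup.of v ^ n) ∨
    (∃ u v : V, Δ.graph.Adj u v ∧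
      r = altWord (Δ.m u v) (FreeGroup.of u) (FreeGroup.of v) *
        (altWord (Δ.m u v) (FreeGroup.of v) (FreeGroup.of u))⁻¹)}

end DyerGraph

/-- The Dyer group `D(𝒢,m,f)` given by the standard presentation. -/
abbrev DyerGroup {V : Type u} [Fintype V] (Δ : DyerGraph V) : Type u :=
  PresentedGroup Δ.rels

namespace DyerGraph

variable {V : Type u} [Fintype V] (Δ : DyerGraph V)

/-- The standard generator `x_v` of the Dyer group. -/
def gen (v : V) : DyerGroup Δ := PresentedGroup.of v

/-- The vertex group of the generator `x_v`:
`{x_v^α : α ∈ ℤ_{f(v)} ∖ {0}}`. -/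
def vertexGroup (v : V) : Set (DyerGroup Δ) :=
  {g | (∃ n : ℕ, Δ.f v = (n : ℕ∞) ∧ ∃ a : ℤ, ¬((n : ℤ) ∣ a) ∧ g = Δ.gen v ^ a) ∨
    (Δ.f v = ⊤ ∧ ∃ a : ℤ, a ≠ 0 ∧ g = Δ.gen v ^ a)}

/-- The finite symmetric generating set `X_S`. -/
def XS : Set (DyerGroup Δ) :=
  {g | ∃ v : V,
    (∃ n : ℕ, Δ.f v = (n : ℕ∞) ∧ ∃ a : ℤ, ¬((n : ℤ) ∣ a) ∧ g = Δ.gen v ^ a) ∨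
    (Δ.f v = ⊤ ∧ (g = Δ.gen v ∨ g = (Δ.gen v)⁻¹))}

/-- The set of syllables `S(X)`. -/
def SX : Set (DyerGroup Δ) := {g | ∃ v : V, g ∈ Δ.vertexGroup v}

end DyerGraph

/-! ### Cayley graphs, paths, cycles and mediangle graphs -/

/-- The Cayley graph of a group `G` with respect to a subset `S`: vertices are the
elements of `G` and `{g,h}` is an edge whenever `g⁻¹ * h ∈ S` (or `h⁻¹ * g ∈ S`;
for symmetric `S` these agree). -/
def cayley (G : Type*) [Group G] (S : Set G) : SimpleGraph G :=
  SimpleGraph.fromRel fun g h => g⁻¹ * h ∈ S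

/-- A finite combinatorial path `(v_0, …, v_len)` in a graph, regarded as a function
`ℕ → V` which is constant equal to `v_len` from `len` on. -/
structure GraphPath {W : Type*} (Γ : SimpleGraph W) where
  len : ℕ
  toFun : ℕ → W
  adj : ∀ i, i < len → Γ.Adj (toFun i) (toFun (i + 1))
  stable : ∀ i, len ≤ i → toFun i = toFun len

/-- A path is geodesic if its length equals the distance between its endpoints. -/
def IsGeodesic {W : Type*} {Γ : SimpleGraph W} (p : GraphPath Γ) : Prop :=
  Γ.dist (p.toFun 0) (p.toFun p.len) = p.len

/-- Two paths `k`-fellow travel if `d(γ(t), α(t)) ≤ k` for all `t`. -/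
def FellowTravel {W : Type*} {Γ : SimpleGraph W} (k : ℕ) (p q : GraphPath Γ) : Prop :=
  ∀ t : ℕ, Γ.dist (p.toFun t) (q.toFun t) ≤ k

/-- A graph has the falsification by fellow-traveller property with constant `k` if every
non-geodesic path is `k`-fellow-travelled by a strictly shorter path with the same
endpoints. -/
def FFTP {W : Type*} (Γ : SimpleGraph W) (k : ℕ) : Prop :=
  ∀ p : GraphPath Γ, ¬ IsGeodesic p →
    ∃ q : GraphPath Γ, q.toFun 0 = p.toFun 0 ∧ q.toFun q.len = p.toFun p.len ∧
      q.len < p.len ∧ FellowTravel k p q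

/-- The interval `I(x,y)` between two vertices. -/
def interval {W : Type*} (Γ : SimpleGraph W) (x y : W) : Set W :=
  {z | Γ.dist x y = Γ.dist x z + Γ.dist z y}

/-- A set of vertices is convex if it contains the interval between any two of its points. -/
def IsConvexSet {W : Type*} (Γ : SimpleGraph W) (s : Set W) : Prop :=
  ∀ x ∈ s, ∀ y ∈ s, interval Γ x y ⊆ s

/-- A combinatorial cycle of length `len ≥ 3` in a graph: an injective map
`ZMod len → W` with consecutive vertices adjacent. -/
structure GraphCycle {W : Type*} (Γ : SimpleGraph W) where
  len : ℕ
  three_le : 3 ≤ len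
  toFun : ZMod len → W
  adj : ∀ i : ZMod len, Γ.Adj (toFun i) (toFun (i + 1))
  inj : Function.Injective toFun

/-- The set of edges of a cycle. -/
def cycleEdges {W : Type*} {Γ : SimpleGraph W} (c : GraphCycle Γ) : Set (Sym2 W) :=
  {e | ∃ i : ZMod c.len, e = s(c.toFun i, c.toFun (i + 1))}

/-- The edge `{x,y}` is an edge of the cycle `c`. -/
def edgeInCycle {W : Type*} {Γ : SimpleGraph W} (c : GraphCycle Γ) (x y : W) : Prop :=
  ∃ i : ZMod c.len,
    (c.toFun i = x ∧ c.toFun (i + 1) = y) ∨ (c.toFun i = y ∧ c.toFun (i + 1) = x)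

/-- Triangle condition. -/
def TriangleCond {W : Type*} (Γ : SimpleGraph W) : Prop :=
  ∀ o x y : W, Γ.dist o x = Γ.dist o y → Γ.Adj x y →
    ∃ z : W, Γ.Adj x z ∧ Γ.Adj y z ∧ z ∈ interval Γ o x ∩ interval Γ o y

/-- No induced copy of `K₄` minus an edge. -/
def NoInducedK4Minus {W : Type*} (Γ : SimpleGraph W) : Prop :=
  ¬ ∃ g h p q : W, g ≠ h ∧ g ≠ p ∧ g ≠ q ∧ h ≠ p ∧ h ≠ q ∧ p ≠ q ∧
    Γ.Adj g h ∧ Γ.Adj g p ∧ Γ.Adj g q ∧ Γ.Adj h p ∧ Γ.Adj h q ∧ ¬ Γ.Adj p q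

/-- Cycle condition. -/
def CycleCond {W : Type*} (Γ : SimpleGraph W) : Prop :=
  ∀ o x y z : W, Γ.dist o z = Γ.dist o x + 1 → Γ.dist o z = Γ.dist o y + 1 →
    Γ.Adj x z → Γ.Adj y z →
    ∃ (c : GraphCycle Γ) (k : ℕ) (i : ZMod c.len),
      c.len = 2 * k ∧ IsConvexSet Γ (Set.range c.toFun) ∧
      edgeInCycle c x z ∧ edgeInCycle c y z ∧ c.toFun i = z ∧
      c.toFun (i + (k : ZMod c.len)) ∈ interval Γ o x ∩ interval Γ o y

/-- Intersection of even cycles condition: any two distinct convex cycles of even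
lengths share at most one edge. -/
def EvenCyclesCond {W : Type*} (Γ : SimpleGraph W) : Prop :=
  ∀ c₁ c₂ : GraphCycle Γ, Even c₁.len → Even c₂.len →
    IsConvexSet Γ (Set.range c₁.toFun) → IsConvexSet Γ (Set.range c₂.toFun) →
    cycleEdges c₁ ≠ cycleEdges c₂ →
    Set.Subsingleton (cycleEdges c₁ ∩ cycleEdges c₂)

/-- A connected graph is mediangle if it satisfies the triangle condition, contains no
induced `K₄` minus an edge, satisfies the cycle condition, and any two distinct convex
even cycles intersect in at most one edge. -/
def IsMediangle {W : Type*} (Γ : SimpleGraph W) : Prop :=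
  Γ.Connected ∧ TriangleCond Γ ∧ NoInducedK4Minus Γ ∧ CycleCond Γ ∧ EvenCyclesCond Γ

/-- The elementary relation generating hyperplanes: two edges lie in a common `3`-cycle,
or they are opposite edges of a common convex cycle of even length. -/
def hypRel {W : Type*} (Γ : SimpleGraph W) (e₁ e₂ : Sym2 W) : Prop :=
  (∃ a b c : W, Γ.Adj a b ∧ Γ.Adj b c ∧ Γ.Adj a c ∧
    e₁ ∈ ({s(a, b), s(b, c), s(a, c)} : Set (Sym2 W)) ∧
    e₂ ∈ ({s(a, b), s(b, c), s(a, c)} : Set (Sym2 W))) ∨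
  (∃ (c : GraphCycle Γ) (k : ℕ) (i : ZMod c.len), c.len = 2 * k ∧
    IsConvexSet Γ (Set.range c.toFun) ∧
    e₁ = s(c.toFun i, c.toFun (i + 1)) ∧
    e₂ = s(c.toFun (i + (k : ZMod c.len)), c.toFun (i + (k : ZMod c.len) + 1)))

/-- Two edges belong to the same hyperplane: equivalence generated by `hypRel`. -/
def sameHyperplane {W : Type*} (Γ : SimpleGraph W) : Sym2 W → Sym2 W → Prop :=
  Relation.EqvGen (hypRel Γ)

/-- A path crosses each hyperplane at most once. -/
def CrossesEachHyperplaneAtMostOnce {W : Type*} {Γ : SimpleGraph W}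
    (p : GraphPath Γ) : Prop :=
  ∀ i j : ℕ, i < p.len → j < p.len → i ≠ j →
    ¬ sameHyperplane Γ s(p.toFun i, p.toFun (i + 1)) s(p.toFun j, p.toFun (j + 1))

/-- A minimal non-geodesic path: a non-geodesic path whose two subpaths obtained by
removing the last, respectively first, edge are geodesic. -/
def MinimalNonGeodesic {W : Type*} {Γ : SimpleGraph W} (p : GraphPath Γ) : Prop :=
  ¬ IsGeodesic p ∧
  Γ.dist (p.toFun 0) (p.toFun (p.len - 1)) = p.len - 1 ∧
  Γ.dist (p.toFun 1) (p.toFun p.len) = p.len - 1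

/-- The edge `{x,y}` is an edge of a `3`-cycle. -/
def EdgeInTriangle {W : Type*} (Γ : SimpleGraph W) (x y : W) : Prop :=
  Γ.Adj x y ∧ ∃ w : W, Γ.Adj x w ∧ Γ.Adj y w

/-- The edge `{x,y}` is an edge of a convex cycle of even length. -/
def EdgeInConvexEvenCycle {W : Type*} (Γ : SimpleGraph W) (x y : W) : Prop :=
  ∃ c : GraphCycle Γ, Even c.len ∧ IsConvexSet Γ (Set.range c.toFun) ∧ edgeInCycle c x y

/-- A dihedral cycle in a Cayley graph of a Dyer group: a cycle of length `2·m(e)` for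
some edge `e = {u,v}` of the Dyer graph, whose consecutive edge labels alternately
belong to the vertex groups of `x_u` and of `x_v`. -/
def DyerGraph.IsDihedral {V : Type u} [Fintype V] (Δ : DyerGraph V)
    {Γ : SimpleGraph (DyerGroup Δ)} (c : GraphCycle Γ) : Prop :=
  ∃ u v : V, Δ.graph.Adj u v ∧ c.len = 2 * Δ.m u v ∧
    ∀ i : ZMod c.len,
      (Even i.val → (c.toFun i)⁻¹ * c.toFun (i + 1) ∈ Δ.vertexGroup u) ∧
      (¬ Even i.val → (c.toFun i)⁻¹ * c.toFun (i + 1) ∈ Δ.vertexGroup v)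

/-! ### Word length and cone types -/

/-- The word length of `g` with respect to the generating set `S`. -/
noncomputable def wordLength {G : Type*} [Group G] (S : Set G) (g : G) : ℕ :=
  sInf {nid | ∃ l : List G, l.length = nid ∧ (∀ s ∈ l, s ∈ S) ∧ l.prod = g}

/-- The cone type of `g`: the set of elements extending `g` geodesically. -/
noncomputable def coneType {G : Type*} [Group G] (S : Set G) (g : G) : Set G :=
  {h | wordLength S (g * h) = wordLength S g + wordLength S h}

theorem map_altWord {V G : Type*} [CommGroup G] (F : FreeGroup V →* G) :
    ∀ (k : ℕ) (a b : FreeGroup V), F (altWord k a b) = F a ^ ((k + 1) / 2) * F b ^ (k / 2)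
  | 0, a, b => by simp [altWord]
  | k + 1, a, b => by
    rw [altWord, map_mul, map_altWord F k b a, show (k + 1 + 1) / 2 = k / 2 + 1 by omega,
      pow_succ]
    simp only [mul_comm, mul_assoc]

namespace DyerGraph

variable {V : Type u} [Fintype V] (Δ : DyerGraph V)

def OddAdj (a b : V) : Prop := Δ.graph.Adj a b ∧ Odd (Δ.m a b)

def OddConnected : V → V → Prop := Relation.EqvGen Δ.OddAdj

/-- `0` encodes `f v = ∞`, so that `ZMod (Δ.modulus v)` is `ℤ_{f(v)}`. -/
def modulus (v : V) : ℕ := (Δ.f v).toNat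

variable {Δ}

namespace OddConnected

theorem refl (a : V) : Δ.OddConnected a a := Relation.EqvGen.refl a

theorem symm {a b : V} (h : Δ.OddConnected a b) : Δ.OddConnected b a :=
  Relation.EqvGen.symm a b h

theorem trans {a b c : V} (h : Δ.OddConnected a b) (h' : Δ.OddConnected b c) :
    Δ.OddConnected a c :=
  Relation.EqvGen.trans a b c h h'

theorem eq_or_f_eq_two {a b : V} (h : Δ.OddConnected a b) :
    a = b ∨ (Δ.f a = 2 ∧ Δ.f b = 2) := by
  induction h with
  | rel x y hxy =>
    obtain ⟨hadj, hodd⟩ := hxy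
    exact Or.inr (Δ.compat x y hadj fun hm => Nat.not_even_iff_odd.mpr hodd (hm ▸ even_two))
  | refl x => exact Or.inl rfl
  | symm x y _ ih => exact ih.imp Eq.symm And.symm
  | trans x y z _ _ ih₁ ih₂ =>
    rcases ih₁ with rfl | ⟨hx, hy⟩
    · exact ih₂
    · rcases ih₂ with rfl | ⟨-, hz⟩
      · exact Or.inr ⟨hx, hy⟩
      · exact Or.inr ⟨hx, hz⟩

theorem modulus_eq {a b : V} (h : Δ.OddConnected a b) : Δ.modulus a = Δ.modulus b := by
  rcases h.eq_or_f_eq_two with rfl | ⟨ha, hb⟩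
  · rfl
  · rw [modulus, modulus, ha, hb]

end OddConnected

variable (Δ)

open Classical in
noncomputable def oddIndicator (t s : V) : ZMod (Δ.modulus t) :=
  if Δ.OddConnected t s then 1 else 0

theorem lift_oddIndicator_rels (t : V) :
    ∀ r ∈ Δ.rels, FreeGroup.lift (fun s => Multiplicative.ofAdd (Δ.oddIndicator t s)) r = 1 := by
  rintro r (⟨v, n, hfv, rfl⟩ | ⟨p, q, hadj, rfl⟩)
  · rw [map_pow, FreeGroup.lift_apply_of, ← ofAdd_nsmul, oddIndicator]
    split_ifs with h
    · have hn : Δ.modulus t = n := by rw [h.modulus_eq, modulus, hfv, ENat.toNat_natCast]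
      rw [nsmul_one, ← hn, ZMod.natCast_self, ofAdd_zero]
    · rw [nsmul_zero, ofAdd_zero]
  · rw [map_mul, map_inv, map_altWord, map_altWord, FreeGroup.lift_apply_of,
      FreeGroup.lift_apply_of, mul_inv_eq_one]
    rcases Nat.even_or_odd (Δ.m p q) with ⟨k, hk⟩ | hodd
    · rw [show (Δ.m p q + 1) / 2 = Δ.m p q / 2 by omega, mul_comm]
    · have hpq : Δ.OddConnected p q := Relation.EqvGen.rel p q ⟨hadj, hodd⟩
      have hind : Δ.oddIndicator t p = Δ.oddIndicator t q := by
        by_cases hp : Δ.OddConnected t p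
        · rw [oddIndicator, if_pos hp, oddIndicator, if_pos (hp.trans hpq)]
        · rw [oddIndicator, if_neg hp, oddIndicator, if_neg fun hq => hp (hq.trans hpq.symm)]
      rw [hind, mul_comm]

noncomputable def oddCharacter (t : V) : DyerGroup Δ →* Multiplicative (ZMod (Δ.modulus t)) :=
  PresentedGroup.toGroup (Δ.lift_oddIndicator_rels t)

noncomputable def oddExponent (t : V) (x : DyerGroup Δ) : ZMod (Δ.modulus t) :=
  (Δ.oddCharacter t x).toAdd

variable {Δ}

theorem oddExponent_mul (t : V) (x y : DyerGroup Δ) :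
    Δ.oddExponent t (x * y) = Δ.oddExponent t x + Δ.oddExponent t y := by
  rw [oddExponent, map_mul, toAdd_mul]
  rfl

theorem oddExponent_gen_zpow (t s : V) (a : ℤ) :
    Δ.oddExponent t (Δ.gen s ^ a) = a * Δ.oddIndicator t s := by
  rw [oddExponent, map_zpow, oddCharacter, gen, PresentedGroup.toGroup.of, toAdd_zpow,
    toAdd_ofAdd, zsmul_eq_mul]

theorem gen_zpow_modulus (v : V) : Δ.gen v ^ (Δ.modulus v : ℤ) = 1 := by
  cases hf : Δ.f v using ENat.recTopCoe with
  | top => simp [modulus, hf]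
  | coe n =>
    have hr : FreeGroup.of v ^ n ∈ Δ.rels := Or.inl ⟨v, n, hf, rfl⟩
    have h : Δ.gen v ^ n = 1 := by
      rw [gen, PresentedGroup.of, ← map_pow]
      exact (QuotientGroup.eq_one_iff _).mpr (Subgroup.subset_normalClosure hr)
    simpa [modulus, hf] using h

theorem mem_vertexGroup_iff {v : V} {x : DyerGroup Δ} :
    x ∈ Δ.vertexGroup v ↔ ∃ a : ℤ, ¬(Δ.modulus v : ℤ) ∣ a ∧ x = Δ.gen v ^ a := by
  rw [vertexGroup, Set.mem_ofPred_eq, modulus]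
  cases hf : Δ.f v using ENat.recTopCoe with
  | top => simp
  | coe n => simp

theorem oddExponent_eq_zero_iff {s : V} {x : DyerGroup Δ} (hx : x ∈ Δ.vertexGroup s) (t : V) :
    Δ.oddExponent t x = 0 ↔ ¬Δ.OddConnected t s := by
  obtain ⟨a, ha, rfl⟩ := mem_vertexGroup_iff.mp hx
  rw [oddExponent_gen_zpow, oddIndicator]
  split_ifs with h
  · rw [mul_one, ZMod.intCast_zmod_eq_zero_iff_dvd, h.modulus_eq]
    exact iff_of_false ha (not_not.mpr h)
  · simpa using h

theorem ne_one_of_mem_vertexGroup {v : V} {x : DyerGroup Δ} (hx : x ∈ Δ.vertexGroup v) :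
    x ≠ 1 := by
  rintro rfl
  exact (oddExponent_eq_zero_iff hx v).mp (by simp [oddExponent]) (OddConnected.refl v)

theorem inv_mem_vertexGroup {v : V} {x : DyerGroup Δ} (hx : x ∈ Δ.vertexGroup v) :
    x⁻¹ ∈ Δ.vertexGroup v := by
  obtain ⟨a, ha, rfl⟩ := mem_vertexGroup_iff.mp hx
  exact mem_vertexGroup_iff.mpr ⟨-a, dvd_neg.not.mpr ha, (zpow_neg _ a).symm⟩

theorem mul_mem_vertexGroup {v : V} {x y : DyerGroup Δ} (hx : x ∈ Δ.vertexGroup v)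
    (hy : y ∈ Δ.vertexGroup v) (hxy : x * y ≠ 1) : x * y ∈ Δ.vertexGroup v := by
  obtain ⟨a, -, rfl⟩ := mem_vertexGroup_iff.mp hx
  obtain ⟨b, -, rfl⟩ := mem_vertexGroup_iff.mp hy
  rw [← zpow_add] at hxy ⊢
  refine mem_vertexGroup_iff.mpr ⟨a + b, fun ⟨c, hc⟩ => hxy ?_, rfl⟩
  rw [hc, zpow_mul, gen_zpow_modulus, one_zpow]

theorem exists_mem_vertexGroup_of_adj {x y : DyerGroup Δ}
    (hxy : (cayley (DyerGroup Δ) Δ.SX).Adj x y) : ∃ v : V, x⁻¹ * y ∈ Δ.vertexGroup v := by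
  rcases (SimpleGraph.fromRel_adj _ _ _).mp hxy |>.2 with h | ⟨v, hv⟩
  · exact h
  · exact ⟨v, by simpa using inv_mem_vertexGroup hv⟩

theorem oddConnected_of_mul_mem_vertexGroup {u v w : V} {x y : DyerGroup Δ}
    (hx : x ∈ Δ.vertexGroup u) (hy : y ∈ Δ.vertexGroup v) (hxy : x * y ∈ Δ.vertexGroup w) :
    Δ.OddConnected u v ∧ Δ.OddConnected u w := by
  have ex := oddExponent_eq_zero_iff hx
  have ey := oddExponent_eq_zero_iff hy
  have exy := oddExponent_eq_zero_iff hxy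
  have huv : Δ.OddConnected u v := by
    by_contra huv
    have huw : Δ.OddConnected u w := by
      by_contra huw
      refine (ex u).mp ?_ (OddConnected.refl u)
      simpa [(ey u).mpr huv, (exy u).mpr huw] using (oddExponent_mul u x y).symm
    refine (ey v).mp ?_ (OddConnected.refl v)
    have hvu : ¬Δ.OddConnected v u := fun h => huv h.symm
    have hvw : ¬Δ.OddConnected v w := fun h => hvu (h.trans huw.symm)
    simpa [(ex v).mpr hvu, (exy v).mpr hvw] using (oddExponent_mul v x y).symm
  refine ⟨huv, by_contra fun huw => ?_⟩
  refine (exy w).mp ?_ (OddConnected.refl w)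
  have hwu : ¬Δ.OddConnected w u := fun h => huw h.symm
  have hwv : ¬Δ.OddConnected w v := fun h => hwu (h.trans huv.symm)
  simp [oddExponent_mul, (ex w).mpr hwu, (ey w).mpr hwv]

theorem eq_of_mul_mem_vertexGroup {u v w : V} {x y : DyerGroup Δ}
    (hx : x ∈ Δ.vertexGroup u) (hy : y ∈ Δ.vertexGroup v) (hxy : x * y ∈ Δ.vertexGroup w) :
    u = v := by
  by_contra hne
  obtain ⟨huv, huw⟩ := oddConnected_of_mul_mem_vertexGroup hx hy hxy
  have hmod : Δ.modulus u = 2 := by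
    rw [modulus, (huv.eq_or_f_eq_two.resolve_left hne).1]
    rfl
  have hx0 := (oddExponent_eq_zero_iff hx u).not_left.mpr (OddConnected.refl u)
  have hy0 := (oddExponent_eq_zero_iff hy u).not_left.mpr huv
  have hxy0 := (oddExponent_eq_zero_iff hxy u).not_left.mpr huw
  have hsum_zero : ∀ p q : ZMod (Δ.modulus u), p ≠ 0 → q ≠ 0 → p + q = 0 := by
    rw [hmod]
    decide
  exact hxy0 (oddExponent_mul u x y ▸ hsum_zero _ _ hx0 hy0)

end DyerGraph

open DyerGraph

/-- In `Cay(D, S(X))`, every `3`-cycle has each of its edges labelled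
by the same vertex group: if `g, h, k` are pairwise adjacent, there is a vertex `v` of
the Dyer graph with `g⁻¹h, h⁻¹k, g⁻¹k` all in the vertex group of `x_v`. -/
theorem dyer_cayley_SX_triangle_labels {V : Type u} [Fintype V] (Δ : DyerGraph V)
    (g h k : DyerGroup Δ)
    (hgh : (cayley (DyerGroup Δ) Δ.SX).Adj g h)
    (hhk : (cayley (DyerGroup Δ) Δ.SX).Adj h k)
    (hgk : (cayley (DyerGroup Δ) Δ.SX).Adj g k) :
    ∃ v : V, g⁻¹ * h ∈ Δ.vertexGroup v ∧ h⁻¹ * k ∈ Δ.vertexGroup v ∧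
      g⁻¹ * k ∈ Δ.vertexGroup v := by
  obtain ⟨u, hu⟩ := exists_mem_vertexGroup_of_adj hgh
  obtain ⟨v, hv⟩ := exists_mem_vertexGroup_of_adj hhk
  obtain ⟨w, hw⟩ := exists_mem_vertexGroup_of_adj hgk
  have hprod : g⁻¹ * h * (h⁻¹ * k) = g⁻¹ * k := by group
  rw [← hprod] at hw ⊢
  obtain rfl := eq_of_mul_mem_vertexGroup hu hv hw
  exact ⟨u, hu, hv, mul_mem_vertexGroup hu hv (ne_one_of_mem_vertexGroup hw)⟩
end

section
/- Let G be a group with a finite symmetric generating set S. If the Cayley graph Cay(G,S) has the falsification by fellow-traveller property (for some constant k), then (G,S) has finitely many cone types. -/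
universe u

/-! The cone type of `g` is determined by its `k`-tail `{x | |x| ≤ k ∧ |g x| ≤ |g|}`. Suppose `g`
and `h` have the same tail and `y` extends `g` geodesically but not `h`. Then a geodesic for `h`
followed by one for `y` is a non-geodesic path, so FFTP yields a shorter path `q` from `1` to `h y`
that `k`-fellow travels it. At time `|h|` the path `q` is at a point `h x` with `x` in the tail of
`h`, hence of `g`, and it reaches `h y` in fewer than `|y|` further steps; translating by `g h⁻¹`
gives `|g y| < |g| + |y|`. The tails are subsets of the finite ball of radius `k`, so there are
finitely many of them. -/

namespace SimpleGraph

variable {V V' : Type*} {Γ : SimpleGraph V} {Γ' : SimpleGraph V'}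

lemma Reachable.dist_map_le {a b : V} (h : Γ.Reachable a b) (f : Γ →g Γ') :
    Γ'.dist (f a) (f b) ≤ Γ.dist a b := by
  obtain ⟨w, hw⟩ := h.exists_walk_length_eq_dist
  exact hw ▸ (dist_le (w.map f)).trans_eq (w.length_map f)

@[simps]
def Walk.toGraphPath {a b : V} (w : Γ.Walk a b) : GraphPath Γ where
  len := w.length
  toFun := w.getVert
  adj _ hi := w.adj_getVert_succ hi
  stable _ hi := by rw [w.getVert_of_length_le hi, w.getVert_length]

@[simp]
lemma Walk.toGraphPath_toFun_zero {a b : V} (w : Γ.Walk a b) : w.toGraphPath.toFun 0 = a :=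
  w.getVert_zero

@[simp]
lemma Walk.toGraphPath_toFun_len {a b : V} (w : Γ.Walk a b) :
    w.toGraphPath.toFun w.toGraphPath.len = b :=
  w.getVert_length

end SimpleGraph

namespace GraphPath

variable {V : Type*} {Γ : SimpleGraph V}

lemma reachable_succ (p : GraphPath Γ) (i : ℕ) :
    Γ.Reachable (p.toFun i) (p.toFun (i + 1)) := by
  by_cases hi : i < p.len
  · exact (p.adj i hi).reachable
  · rw [p.stable i (by omega), p.stable (i + 1) (by omega)]

lemma dist_succ_le_one (p : GraphPath Γ) (i : ℕ) :
    Γ.dist (p.toFun i) (p.toFun (i + 1)) ≤ 1 := by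
  by_cases hi : i < p.len
  · exact (SimpleGraph.dist_eq_one_iff_adj.mpr (p.adj i hi)).le
  · rw [p.stable i (by omega), p.stable (i + 1) (by omega), SimpleGraph.dist_self]
    exact zero_le_one

lemma dist_add_le (p : GraphPath Γ) (i d : ℕ) :
    Γ.dist (p.toFun i) (p.toFun (i + d)) ≤ d := by
  induction d with
  | zero => simp
  | succ d ih =>
    calc Γ.dist (p.toFun i) (p.toFun (i + (d + 1)))
        ≤ Γ.dist (p.toFun i) (p.toFun (i + d)) + Γ.dist (p.toFun (i + d)) (p.toFun (i + d + 1)) :=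
          (p.reachable_succ (i + d)).dist_triangle_right _
      _ ≤ d + 1 := add_le_add ih (p.dist_succ_le_one _)

end GraphPath

section FFTP

open SimpleGraph

variable {V V' : Type*} {Γ : SimpleGraph V} {Γ' : SimpleGraph V'}

theorem FFTP.dist_eq_add_of_map {k : ℕ} (hfftp : FFTP Γ k) (hconn : Γ.Connected) (f : Γ →g Γ')
    {o u z : V} {o' : V'}
    (htail : ∀ x, Γ.dist u x ≤ k → Γ.dist o x ≤ Γ.dist o u →
      Γ'.dist o' (f x) ≤ Γ'.dist o' (f u))
    (hz : Γ'.dist o' (f z) = Γ'.dist o' (f u) + Γ.dist u z) :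
    Γ.dist o z = Γ.dist o u + Γ.dist u z := by
  refine le_antisymm hconn.dist_triangle (not_lt.mp fun hlt => ?_)
  obtain ⟨w₁, hw₁⟩ := hconn.exists_walk_length_eq_dist o u
  obtain ⟨w₂, hw₂⟩ := hconn.exists_walk_length_eq_dist u z
  set L := Γ.dist o u
  set n := Γ.dist u z
  set p := (w₁.append w₂).toGraphPath
  have hp_len : p.len = L + n := by simp [p, hw₁, hw₂]
  have hpu : p.toFun L = u := by
    simp [p, Walk.getVert_append', ← hw₁]
  have hp : ¬IsGeodesic p := by
    rw [IsGeodesic, Walk.toGraphPath_toFun_zero,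
      Walk.toGraphPath_toFun_len, hp_len]
    omega
  obtain ⟨q, hq₀, hq_end, hq_len, hfel⟩ := hfftp p hp
  set x := q.toFun L
  have hxu : Γ.dist u x ≤ k := hpu ▸ hfel L
  have hox : Γ.dist o x ≤ L := by
    simpa [hq₀, p] using q.dist_add_le 0 L
  have hxz : Γ.dist x z ≤ n - 1 := by
    have hz_eq : q.toFun (L + (n - 1)) = z := by
      rw [q.stable _ (by omega), hq_end, Walk.toGraphPath_toFun_len]
    simpa [hz_eq] using q.dist_add_le L (n - 1)
  have hn : 1 ≤ n := by
    have := hconn.dist_triangle (u := o) (v := z) (w := u)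
    rw [Γ.dist_comm (u := z)] at this
    omega
  have hfxz := ((hconn x z).dist_map_le f).trans hxz
  have htri := ((hconn x z).map f).dist_triangle_right o'
  have hfx := htail x hxu hox
  omega

end FFTP

section Cayley

open SimpleGraph

variable {G : Type*} [Group G] {S : Set G}

lemma cayley_adj_iff (hsym : ∀ s ∈ S, s⁻¹ ∈ S) {a b : G} :
    (cayley G S).Adj a b ↔ a ≠ b ∧ a⁻¹ * b ∈ S := by
  rw [cayley, SimpleGraph.fromRel_adj]
  refine and_congr_right fun _ => ⟨?_, Or.inl⟩
  rintro (h | h)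
  · exact h
  · simpa using hsym _ h

def cayleyMulLeft (S : Set G) (g : G) : cayley G S →g cayley G S where
  toFun := (g * ·)
  map_rel' := by simp [cayley, mul_assoc]

@[simp]
lemma cayleyMulLeft_apply (g a : G) : cayleyMulLeft S g a = g * a := rfl

lemma exists_list_length_eq_wordLength (hsym : ∀ s ∈ S, s⁻¹ ∈ S)
    (hgen : Subgroup.closure S = ⊤) (g : G) :
    ∃ l : List G, l.length = wordLength S g ∧ (∀ s ∈ l, s ∈ S) ∧ l.prod = g := by
  have hg : g ∈ (Subgroup.closure S).toSubmonoid := by simp [hgen]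
  rw [Subgroup.closure_toSubmonoid] at hg
  obtain ⟨l, hl, hprod⟩ := Submonoid.exists_list_of_mem_closure hg
  refine Nat.sInf_mem (s := {n | ∃ l : List G, l.length = n ∧ (∀ s ∈ l, s ∈ S) ∧ l.prod = g})
    ⟨l.length, l, rfl, fun s hs => ?_, hprod⟩
  rcases hl s hs with h | h
  · exact h
  · simpa using hsym _ (Set.mem_inv.mp h)

lemma exists_walk_length_le_of_list (hsym : ∀ s ∈ S, s⁻¹ ∈ S) (l : List G)
    (hl : ∀ s ∈ l, s ∈ S) (a : G) :
    ∃ w : (cayley G S).Walk a (a * l.prod), w.length ≤ l.length := by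
  induction l generalizing a with
  | nil => exact ⟨(Walk.nil : (cayley G S).Walk a a).copy rfl (by simp),
      (Walk.length_copy _ _ _).le⟩
  | cons s l ih =>
    obtain ⟨w, hw⟩ := ih (fun t ht => hl t (List.mem_cons_of_mem _ ht)) (a * s)
    have hend : a * s * l.prod = a * (s :: l).prod := by simp [mul_assoc]
    by_cases has : a = a * s
    · exact ⟨w.copy has.symm hend, (w.length_copy _ _).trans_le (hw.trans (Nat.le_succ _))⟩
    · have hadj : (cayley G S).Adj a (a * s) :=
        (cayley_adj_iff hsym).mpr ⟨has, by simpa using hl s List.mem_cons_self⟩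
      exact ⟨(w.cons hadj).copy rfl hend,
        ((w.cons hadj).length_copy _ _).trans_le (Nat.succ_le_succ hw)⟩

lemma exists_list_of_walk (hsym : ∀ s ∈ S, s⁻¹ ∈ S) {a b : G} (w : (cayley G S).Walk a b) :
    ∃ l : List G, l.length = w.length ∧ (∀ s ∈ l, s ∈ S) ∧ a * l.prod = b := by
  induction w with
  | nil => exact ⟨[], by simp⟩
  | @cons a c b hadj w ih =>
    obtain ⟨l, hlen, hl, hprod⟩ := ih
    refine ⟨(a⁻¹ * c) :: l, by simp [hlen], ?_, by simp [← mul_assoc, hprod]⟩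
    exact List.forall_mem_cons.mpr ⟨((cayley_adj_iff hsym).mp hadj).2, hl⟩

lemma cayley_connected (hsym : ∀ s ∈ S, s⁻¹ ∈ S) (hgen : Subgroup.closure S = ⊤) :
    (cayley G S).Connected := by
  have h1 (g : G) : (cayley G S).Reachable 1 g := by
    obtain ⟨l, -, hl, rfl⟩ := exists_list_length_eq_wordLength hsym hgen g
    obtain ⟨w, -⟩ := exists_walk_length_le_of_list hsym l hl 1
    simpa using w.reachable
  exact connected_iff_exists_forall_reachable _ |>.mpr ⟨1, h1⟩

lemma wordLength_eq_dist (hsym : ∀ s ∈ S, s⁻¹ ∈ S) (hgen : Subgroup.closure S = ⊤) (g : G) :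
    wordLength S g = (cayley G S).dist 1 g := by
  apply le_antisymm
  · obtain ⟨w, hw⟩ := (cayley_connected hsym hgen).exists_walk_length_eq_dist 1 g
    obtain ⟨l, hlen, hl, hprod⟩ := exists_list_of_walk hsym w
    exact hw ▸ hlen ▸ Nat.sInf_le ⟨l, rfl, hl, by simpa using hprod⟩
  · obtain ⟨l, hlen, hl, rfl⟩ := exists_list_length_eq_wordLength hsym hgen g
    obtain ⟨w, hw⟩ := exists_walk_length_le_of_list hsym l hl 1
    rw [← hlen]
    exact (dist_le (w.copy rfl (one_mul _))).trans_eq (w.length_copy _ _) |>.trans hw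

lemma cayley_dist_eq_wordLength (hsym : ∀ s ∈ S, s⁻¹ ∈ S) (hgen : Subgroup.closure S = ⊤)
    (a b : G) : (cayley G S).dist a b = wordLength S (a⁻¹ * b) := by
  have hconn := cayley_connected hsym hgen
  rw [wordLength_eq_dist hsym hgen]
  apply le_antisymm
  · simpa using (hconn 1 (a⁻¹ * b)).dist_map_le (cayleyMulLeft S a)
  · simpa using (hconn a b).dist_map_le (cayleyMulLeft S a⁻¹)

lemma finite_setOf_wordLength_le (hfin : S.Finite) (hsym : ∀ s ∈ S, s⁻¹ ∈ S)
    (hgen : Subgroup.closure S = ⊤) (k : ℕ) : {g : G | wordLength S g ≤ k}.Finite := by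
  have : Finite S := hfin.to_subtype
  refine ((List.finite_length_le S k).image fun l => (l.map Subtype.val).prod).subset ?_
  intro g hg
  obtain ⟨l, hlen, hl, rfl⟩ := exists_list_length_eq_wordLength hsym hgen g
  lift l to List S using hl
  refine ⟨l, ?_, rfl⟩
  have hg' : wordLength S _ ≤ k := hg
  rw [← hlen] at hg'
  simpa using hg'

end Cayley

section ConeType

variable {G : Type*} [Group G] {S : Set G}

def coneTail (S : Set G) (k : ℕ) (g : G) : Set G :=
  {x | wordLength S x ≤ k ∧ wordLength S (g * x) ≤ wordLength S g}

lemma coneType_subset_of_coneTail_subset (hsym : ∀ s ∈ S, s⁻¹ ∈ S)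
    (hgen : Subgroup.closure S = ⊤) {k : ℕ} (hfftp : FFTP (cayley G S) k) {g h : G}
    (htail : coneTail S k h ⊆ coneTail S k g) : coneType S g ⊆ coneType S h := by
  intro y hy
  have hdist := cayley_dist_eq_wordLength hsym hgen
  have key := hfftp.dist_eq_add_of_map (cayley_connected hsym hgen)
    (cayleyMulLeft S (g * h⁻¹)) (o := 1) (u := h) (z := h * y) (o' := 1)
  simp only [hdist, cayleyMulLeft_apply, inv_one, one_mul, mul_assoc, inv_mul_cancel, mul_one,
    inv_mul_cancel_left] at key
  refine key (fun x hx hhx => ?_) hy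
  have hmem : h⁻¹ * x ∈ coneTail S k g := htail ⟨hx, by simpa using hhx⟩
  simpa [mul_assoc] using hmem.2

lemma coneType_eq_of_coneTail_eq (hsym : ∀ s ∈ S, s⁻¹ ∈ S) (hgen : Subgroup.closure S = ⊤)
    {k : ℕ} (hfftp : FFTP (cayley G S) k) {g h : G} (htail : coneTail S k g = coneTail S k h) :
    coneType S g = coneType S h :=
  (coneType_subset_of_coneTail_subset hsym hgen hfftp htail.ge).antisymm
    (coneType_subset_of_coneTail_subset hsym hgen hfftp htail.le)

end ConeType

/-- If the Cayley graph of a group `G` with respect to a finite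
symmetric generating set `S` has the falsification by fellow-traveller property (for
some constant `k`), then `(G,S)` has finitely many cone types. -/
theorem fftp_finitely_many_cone_types {G : Type*} [Group G] (S : Set G)
    (hfin : S.Finite) (hsym : ∀ s ∈ S, s⁻¹ ∈ S) (hgen : Subgroup.closure S = ⊤)
    (k : ℕ) (hfftp : FFTP (cayley G S) k) :
    (Set.range fun g : G => coneType S g).Finite := by
  have htails : (Set.range (coneTail S k)).Finite :=
    (finite_setOf_wordLength_le hfin hsym hgen k).finite_subsets.subset <| by
      rintro _ ⟨g, rfl⟩ x hx
      exact hx.1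
  have hfactor : (coneType S).FactorsThrough (coneTail S k) := fun _ _ =>
    coneType_eq_of_coneTail_eq hsym hgen hfftp
  rw [← Function.FactorsThrough.extend_comp (fun _ => ∅) hfactor, Set.range_comp]
  exact htails.image _
end
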